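/- Reduction to the model system (derivation of the main model equation, Section 2.2 of the paper, single-mode version): for every even integer n ≥ 4 there exist a real constant q' ≥ 1, a constant F ≥ 0, and continuous functions f₁, f₂, f₃ : [0,∞) → ℝ with |fᵢ(τ)| ≤ F for all τ ≥ 0, depending only on n, such that for every λ ≥ 0 and every (n/2+2)-times continuously differentiable function ψ : (0,∞) → ℝ satisfying the mode-λ self-similar wave ODE on (0,∞), the functions a(τ) := ψ⁽ⁿᐟ²⁾(τ²) and c(τ) := ψ⁽ⁿᐟ²⁻¹⁾(τ²) satisfy, for all τ > 0: a''(τ) + τ⁻¹·a'(τ) + 4q'·a(τ) + 4λ²·(τ²+1)⁻²·a(τ) = f₁(τ)·τ·a'(τ) + f₂(τ)·τ²·a(τ) + f₃(τ)·c(τ), and c'(τ) = 2τ·a(τ). -/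

import Mathlib

open Set Filter

/-- `ψ` solves the mode-`lam` self-similar wave ODE on `(0,∞)`:
`v(v+1)²·ψ'' + (1 − n/2)·(v+1)²·ψ' + n·v·(v+1)·ψ' + λ²·ψ = 0`. -/
def SolvesWaveODE (n : ℕ) (lam : ℝ) (ψ : ℝ → ℝ) : Prop :=
  ∀ v > (0:ℝ),
    v * (v + 1) ^ 2 * iteratedDeriv 2 ψ v
      + (1 - (n : ℝ) / 2) * (v + 1) ^ 2 * deriv ψ v
      + (n : ℝ) * v * (v + 1) * deriv ψ v
      + lam ^ 2 * ψ v = 0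

/-!
Write `m = n/2`. The ODE is `P ψ'' + Q ψ' + λ² ψ = 0` with `P = v(v+1)²` and
`Q = (m+1)v² + 2v + 1 - m`. Differentiating it `m` times, the coefficient of `ψ⁽ᵐ⁺¹⁾` becomes
`(4m+1)(v+1)² - 4m(v+1)`, so after dividing by `(v+1)²` the top-order part is
`v ψ⁽ᵐ⁺²⁾ + ψ⁽ᵐ⁺¹⁾ + 4m v/(v+1) ψ⁽ᵐ⁺¹⁾`. In the variable `v = τ²`, with `a(τ) = ψ⁽ᵐ⁾(τ²)`, this is
`(a'' + τ⁻¹a')/4 + 2m τ a'/(τ²+1)`, and all remaining coefficients have the bounded form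
`(aτ² + b)/(τ² + 1)²`. The choice `q' = 2m²` matches, at `τ = 0`, the `λ`-free coefficient of
`4ψ⁽ᵐ⁾`, so that the difference is divisible by `τ²`.
-/

theorem ContDiffAt.hasDerivAt_iteratedDeriv {𝕜 F : Type*} [NontriviallyNormedField 𝕜]
    [NormedAddCommGroup F] [NormedSpace 𝕜 F] {f : 𝕜 → F} {x : 𝕜} {n : WithTop ℕ∞} {j : ℕ}
    (hf : ContDiffAt 𝕜 n f x) (hj : j < n) :
    HasDerivAt (iteratedDeriv j f) (iteratedDeriv (j + 1) f x) x := by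
  have h := (hf.contDiffWithinAt (s := univ)).differentiableWithinAt_iteratedDerivWithin hj
    (by rw [insert_eq_of_mem (mem_univ x)]; exact uniqueDiffOn_univ)
  rw [iteratedDerivWithin_univ, differentiableWithinAt_univ] at h
  rw [iteratedDeriv_succ]
  exact h.hasDerivAt

theorem hasDerivAt_cubic (a b c d x : ℝ) :
    HasDerivAt (fun y => a * y ^ 3 + b * y ^ 2 + c * y + d) (3 * a * x ^ 2 + 2 * b * x + c) x := by
  refine ((((hasDerivAt_pow 3 x).const_mul a).fun_add ((hasDerivAt_pow 2 x).const_mul b)).fun_add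
    ((hasDerivAt_id' x).const_mul c)).add_const d |>.congr_deriv ?_
  norm_num
  ring

section SquareSubstitution

variable {f f' f'' : ℝ → ℝ}

theorem hasDerivAt_comp_sq (hf : ∀ v > 0, HasDerivAt f (f' v) v) {τ : ℝ} (hτ : τ ≠ 0) :
    HasDerivAt (fun s => f (s ^ 2)) (2 * τ * f' (τ ^ 2)) τ := by
  refine ((hf (τ ^ 2) (by positivity)).comp (h := fun s => s ^ 2) τ
    (hasDerivAt_pow 2 τ)).congr_deriv ?_
  norm_num
  ring

theorem deriv_deriv_comp_sq_add_inv_mul_deriv (hf : ∀ v > 0, HasDerivAt f (f' v) v)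
    (hf' : ∀ v > 0, HasDerivAt f' (f'' v) v) {τ : ℝ} (hτ : τ ≠ 0) :
    deriv (deriv fun s => f (s ^ 2)) τ + τ⁻¹ * deriv (fun s => f (s ^ 2)) τ
      = 4 * (τ ^ 2 * f'' (τ ^ 2) + f' (τ ^ 2)) := by
  have hderiv : deriv (fun s => f (s ^ 2)) =ᶠ[nhds τ] fun s => 2 * s * f' (s ^ 2) :=
    eventually_of_mem (isOpen_ne.mem_nhds hτ) fun s hs => (hasDerivAt_comp_sq hf hs).deriv
  have hderiv' : HasDerivAt (fun s => 2 * s * f' (s ^ 2))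
      (2 * f' (τ ^ 2) + 2 * τ * (2 * τ * f'' (τ ^ 2))) τ := by
    simpa using ((hasDerivAt_id' τ).const_mul 2).fun_mul (hasDerivAt_comp_sq hf' hτ)
  rw [hderiv.deriv_eq, hderiv'.deriv, (hasDerivAt_comp_sq hf hτ).deriv]
  field_simp
  ring

end SquareSubstitution

noncomputable def modelCoeff (a b τ : ℝ) : ℝ := (a * τ ^ 2 + b) / (τ ^ 2 + 1) ^ 2

theorem continuous_modelCoeff (a b : ℝ) : Continuous (modelCoeff a b) := by
  unfold modelCoeff
  exact Continuous.div (by fun_prop) (by fun_prop) fun τ => by positivity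

theorem abs_modelCoeff_le (a b τ : ℝ) : |modelCoeff a b τ| ≤ |a| + |b| := by
  have hτ : 1 ≤ τ ^ 2 + 1 := by nlinarith [sq_nonneg τ]
  rw [modelCoeff, abs_div, abs_of_pos (by positivity : (0:ℝ) < (τ ^ 2 + 1) ^ 2),
    div_le_iff₀ (by positivity)]
  calc |a * τ ^ 2 + b| ≤ |a * τ ^ 2| + |b| := abs_add_le _ _
    _ = |a| * τ ^ 2 + |b| := by rw [abs_mul, abs_sq]
    _ ≤ (|a| + |b|) * (τ ^ 2 + 1) := by nlinarith [abs_nonneg a, abs_nonneg b]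
    _ ≤ (|a| + |b|) * (τ ^ 2 + 1) ^ 2 := by
        gcongr
        nlinarith

/-- The `K`-th derivative of `P ψ'' + Q ψ' + λ² ψ` by Leibniz' rule, where `P = v(v+1)²`,
`Q = (μ+1)v² + 2v + 1 - μ` and `μ = n/2`. At `K = 0` the last coefficient vanishes, so the
truncated index `K - 1` is harmless. -/
def DifferentiatedWaveODE (μ lam : ℝ) (ψ : ℝ → ℝ) (K : ℕ) : Prop :=
  ∀ v > (0:ℝ),
    v * (v + 1) ^ 2 * iteratedDeriv (K + 2) ψ v
      + ((3 * K + 1 + μ) * v ^ 2 + (4 * K + 2) * v + (K + 1 - μ)) * iteratedDeriv (K + 1) ψ v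
      + ((3 * K ^ 2 + (2 * μ - 1) * K) * v + 2 * K ^ 2 + lam ^ 2) * iteratedDeriv K ψ v
      + K * (K - 1) * (K - 1 + μ) * iteratedDeriv (K - 1) ψ v = 0

namespace DifferentiatedWaveODE

variable {μ lam : ℝ} {ψ : ℝ → ℝ}

theorem of_solvesWaveODE {n : ℕ} (hμ : (n : ℝ) = 2 * μ) (h : SolvesWaveODE n lam ψ) :
    DifferentiatedWaveODE μ lam ψ 0 := by
  intro v hv
  simp only [Nat.cast_zero, zero_add, iteratedDeriv_one, iteratedDeriv_zero]
  linear_combination h v hv + ((v + 1) ^ 2 / 2 - v * (v + 1)) * deriv ψ v * hμ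

theorem succ {K : ℕ}
    (hψ : ∀ j < K + 3, ∀ v > (0:ℝ), HasDerivAt (iteratedDeriv j ψ) (iteratedDeriv (j + 1) ψ v) v)
    (h : DifferentiatedWaveODE μ lam ψ K) : DifferentiatedWaveODE μ lam ψ (K + 1) := by
  intro v hv
  have hlast : HasDerivAt (fun x => K * (K - 1) * (K - 1 + μ) * iteratedDeriv (K - 1) ψ x)
      (K * (K - 1) * (K - 1 + μ) * iteratedDeriv K ψ v) v := by
    rcases K with _ | K
    · simpa using hasDerivAt_const v (0:ℝ)
    · exact (hψ K (by omega) v hv).const_mul _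
  have hsum := ((((hasDerivAt_cubic 1 2 1 0 v).mul (hψ (K + 2) (by omega) v hv)).add
    ((hasDerivAt_cubic 0 (3 * K + 1 + μ) (4 * K + 2) (K + 1 - μ) v).mul
      (hψ (K + 1) (by omega) v hv))).add
    ((hasDerivAt_cubic 0 0 (3 * K ^ 2 + (2 * μ - 1) * K) (2 * K ^ 2 + lam ^ 2) v).mul
      (hψ K (by omega) v hv))).add hlast
  have hzero := hsum.unique ((hasDerivAt_const v (0:ℝ)).congr_of_eventuallyEq
    (eventually_of_mem (Ioi_mem_nhds hv) fun x hx => by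
      simp only [Pi.add_apply, Pi.mul_apply]
      linear_combination h x hx))
  push_cast
  linear_combination hzero

theorem of_zero {K : ℕ}
    (hψ : ∀ j < K + 2, ∀ v > (0:ℝ), HasDerivAt (iteratedDeriv j ψ) (iteratedDeriv (j + 1) ψ v) v)
    (h : DifferentiatedWaveODE μ lam ψ 0) : DifferentiatedWaveODE μ lam ψ K := by
  induction K with
  | zero => exact h
  | succ K ih => exact (ih fun j hj => hψ j (by omega)).succ hψ

end DifferentiatedWaveODE

/-- Reduction to the model system (derivation of the main model equation,
Section 2.2 of the paper, single-mode version). -/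
theorem reduction_to_model_system (n : ℕ) (hn : Even n) (hn4 : 4 ≤ n) :
    ∃ q' F : ℝ, 1 ≤ q' ∧ 0 ≤ F ∧ ∃ f₁ f₂ f₃ : ℝ → ℝ,
      ContinuousOn f₁ (Ici 0) ∧ ContinuousOn f₂ (Ici 0) ∧ ContinuousOn f₃ (Ici 0) ∧
      (∀ τ ≥ (0:ℝ), |f₁ τ| ≤ F) ∧ (∀ τ ≥ (0:ℝ), |f₂ τ| ≤ F) ∧ (∀ τ ≥ (0:ℝ), |f₃ τ| ≤ F) ∧
      ∀ lam : ℝ, 0 ≤ lam → ∀ ψ : ℝ → ℝ,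
        ContDiffOn ℝ ((n / 2 + 2 : ℕ) : ℕ∞) ψ (Ioi 0) →
        SolvesWaveODE n lam ψ →
        (∀ τ > (0:ℝ),
          deriv (deriv (fun s => iteratedDeriv (n / 2) ψ (s ^ 2))) τ
            + τ⁻¹ * deriv (fun s => iteratedDeriv (n / 2) ψ (s ^ 2)) τ
            + 4 * q' * iteratedDeriv (n / 2) ψ (τ ^ 2)
            + 4 * lam ^ 2 * ((τ ^ 2 + 1) ^ 2)⁻¹ * iteratedDeriv (n / 2) ψ (τ ^ 2)
          = f₁ τ * τ * deriv (fun s => iteratedDeriv (n / 2) ψ (s ^ 2)) τ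
            + f₂ τ * τ ^ 2 * iteratedDeriv (n / 2) ψ (τ ^ 2)
            + f₃ τ * iteratedDeriv (n / 2 - 1) ψ (τ ^ 2)) ∧
        (∀ τ > (0:ℝ),
          deriv (fun s => iteratedDeriv (n / 2 - 1) ψ (s ^ 2)) τ
            = 2 * τ * iteratedDeriv (n / 2) ψ (τ ^ 2)) := by
  obtain ⟨m, rfl⟩ := hn
  rw [show (m + m) / 2 = m by omega]
  have hm : (1 : ℝ) ≤ m := mod_cast (show 1 ≤ m by omega)
  set μ : ℝ := (m : ℝ)
  refine ⟨2 * μ ^ 2, max (max (|-8 * μ| + |-8 * μ|) (|8 * μ ^ 2| + |4 * μ - 4 * μ ^ 2|))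
      (|0| + |-(4 * μ * (μ - 1) * (2 * μ - 1))|), by nlinarith, by positivity,
    modelCoeff (-8 * μ) (-8 * μ), modelCoeff (8 * μ ^ 2) (4 * μ - 4 * μ ^ 2),
    modelCoeff 0 (-(4 * μ * (μ - 1) * (2 * μ - 1))),
    (continuous_modelCoeff _ _).continuousOn, (continuous_modelCoeff _ _).continuousOn,
    (continuous_modelCoeff _ _).continuousOn,
    fun τ _ => (abs_modelCoeff_le _ _ τ).trans (le_max_of_le_left (le_max_left _ _)),
    fun τ _ => (abs_modelCoeff_le _ _ τ).trans (le_max_of_le_left (le_max_right _ _)),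
    fun τ _ => (abs_modelCoeff_le _ _ τ).trans (le_max_right _ _),
    fun lam _ ψ hψ hode => ?_⟩
  have hD : ∀ j < m + 2, ∀ v > (0:ℝ),
      HasDerivAt (iteratedDeriv j ψ) (iteratedDeriv (j + 1) ψ v) v := fun j hj v hv =>
    (hψ.contDiffAt (Ioi_mem_nhds hv)).hasDerivAt_iteratedDeriv (by exact_mod_cast hj)
  have hK : DifferentiatedWaveODE μ lam ψ m := DifferentiatedWaveODE.of_zero hD
    (.of_solvesWaveODE (by push_cast; ring) hode)
  refine ⟨fun τ hτ => ?_, fun τ hτ => ?_⟩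
  · rw [deriv_deriv_comp_sq_add_inv_mul_deriv (hD m (by omega)) (hD (m + 1) (by omega)) hτ.ne',
      (hasDerivAt_comp_sq (hD m (by omega)) hτ.ne').deriv]
    have hdiff := hK (τ ^ 2) (by positivity)
    simp only [modelCoeff]
    field_simp
    linear_combination 4 * hdiff
  · rw [(hasDerivAt_comp_sq (hD (m - 1) (by omega)) hτ.ne').deriv, Nat.sub_add_cancel (by omega)]
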